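/- arXiv:2504.00675 — 8 statements merged into one kernel-verified Lean document; each statement's English description precedes it below -/
import Mathlib

section
/- Let (X, p) be an asymmetrically normed space and x ∈ X with p(x) > 0. Then there exists an upper semicontinuous linear functional φ : X → ℝ with φ(y) ≤ p(y) for all y ∈ X and φ(x) = p(x). -/
/-- The topology induced by an asymmetric norm `p`. -/
def ballTopology {X : Type*} [AddCommGroup X] [Module ℝ X] (p : X → ℝ) : TopologicalSpace X :=
  TopologicalSpace.generateFrom
    {s : Set X | ∃ (x : X) (r : ℝ), 0 < r ∧ s = {y : X | p (y - x) < r}}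

/-- Hahn–Banach for asymmetrically normed spaces: if `p x > 0` there is an
upper semicontinuous linear functional `φ` with `φ ≤ p` pointwise and `φ x = p x`. -/
theorem stmt3 {X : Type*} [AddCommGroup X] [Module ℝ X] (p : X → ℝ)
    (hp0 : ∀ x : X, 0 ≤ p x)
    (hpz : ∀ x : X, (p x = 0 ∧ p (-x) = 0) ↔ x = 0)
    (hph : ∀ (r : ℝ) (x : X), 0 ≤ r → p (r • x) = r * p x)
    (hpt : ∀ x y : X, p (x + y) ≤ p x + p y)
    (x : X) (hx : 0 < p x) :
    ∃ φ : X →ₗ[ℝ] ℝ,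
      @UpperSemicontinuous X ℝ (ballTopology p) _ (fun y => φ y) ∧
      (∀ y : X, φ y ≤ p y) ∧ φ x = p x := by
  have hxne : x ≠ 0 := by
    intro h; subst h
    have : p (0 : X) = 0 := by
      have := hph 0 0 le_rfl; simpa using this
    exact absurd this (ne_of_gt hx)
  have hp00 : p (0 : X) = 0 := by
    have := hph 0 x le_rfl; simpa using this
  set f : X →ₗ.[ℝ] ℝ := LinearPMap.mkSpanSingleton x (p x) hxne with hf
  have hfle : ∀ z : f.domain, f z ≤ p z := by
    rintro ⟨y, hy⟩
    rw [hf] at hy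
    obtain ⟨t, rfl⟩ := Submodule.mem_span_singleton.mp hy
    have happ : f ⟨t • x, hy⟩ = t • p x := by
      exact LinearPMap.mkSpanSingleton'_apply x (p x) _ t (by simpa [hf] using hy)
    rw [happ]
    rcases le_or_gt 0 t with ht | ht
    · rw [hph t x ht]; simp [smul_eq_mul]
    · have : t * p x ≤ 0 := mul_nonpos_of_nonpos_of_nonneg ht.le (hp0 x)
      calc t • p x ≤ 0 := by simpa [smul_eq_mul] using this
        _ ≤ p (t • x) := hp0 _
  obtain ⟨g, hg1, hg2⟩ := exists_extension_of_le_sublinear f p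
    (fun c hc y => hph c y hc.le) hpt hfle
  refine ⟨g, ?_, hg2, ?_⟩
  · -- upper semicontinuity
    letI : TopologicalSpace X := ballTopology p
    intro x₀ c hc
    have hopen : IsOpen {y : X | p (y - x₀) < c - g x₀} :=
      TopologicalSpace.GenerateOpen.basic _ ⟨x₀, c - g x₀, sub_pos.mpr hc, rfl⟩
    have hmem : x₀ ∈ {y : X | p (y - x₀) < c - g x₀} := by
      simp [hp00, sub_pos.mpr hc]
    have hnhds : {y : X | p (y - x₀) < c - g x₀} ∈ nhds x₀ :=
      hopen.mem_nhds hmem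
    filter_upwards [hnhds] with y hy
    have : g y - g x₀ = g (y - x₀) := by rw [map_sub]
    have h2 : g (y - x₀) ≤ p (y - x₀) := hg2 _
    linarith [hy]
  · have hxmem : x ∈ f.domain := by
      rw [hf]; exact Submodule.mem_span_singleton_self x
    rw [hg1 ⟨x, hxmem⟩]
    exact LinearPMap.mkSpanSingleton'_apply_self x (p x) _ hxmem
end

section
/- Let (X, p) be an asymmetrically normed space, f : X → ℝ ∪ {+∞} proper, x ∈ X, φ ∈ X̄* and g = f − φ. If g attains its infimum at x and g(x) is finite, then f(x) ∈ ℝ, f*(φ) = φ(x) − f(x), and f**(x) = f(x). -/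
/-- The dual cone `X̄*` of the conjugate space `(X, p̄)`, `p̄ x = p (-x)`. -/
def dualConeBar {X : Type*} [AddCommGroup X] [Module ℝ X] (p : X → ℝ) : Set (X →ₗ[ℝ] ℝ) :=
  {φ | ∃ C : ℝ, 0 ≤ C ∧ ∀ y : X, φ y ≤ C * p (-y)}

/-- The convex conjugate `f*(φ) = sup_x [φ x − f x]`. -/
noncomputable def conjFn {X : Type*} [AddCommGroup X] [Module ℝ X]
    (f : X → EReal) (φ : X →ₗ[ℝ] ℝ) : EReal :=
  ⨆ x : X, ((φ x : EReal) - f x)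

/-- The biconjugate `f**(x) = sup_{φ ∈ X̄*} [φ x − f*(φ)]`. -/
noncomputable def biconjFn {X : Type*} [AddCommGroup X] [Module ℝ X]
    (p : X → ℝ) (f : X → EReal) (x : X) : EReal :=
  ⨆ φ : dualConeBar p, (((φ : X →ₗ[ℝ] ℝ) x : EReal) - conjFn f (φ : X →ₗ[ℝ] ℝ))

/-- if `g = f − φ` attains its (finite) infimum at `x`, then `f x ∈ ℝ`,
`f*(φ) = φ x − f x` and `f**(x) = f x`. -/
theorem stmt9 {X : Type*} [AddCommGroup X] [Module ℝ X] (p : X → ℝ)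
    (hp0 : ∀ x : X, 0 ≤ p x)
    (hpz : ∀ x : X, (p x = 0 ∧ p (-x) = 0) ↔ x = 0)
    (hph : ∀ (r : ℝ) (x : X), 0 ≤ r → p (r • x) = r * p x)
    (hpt : ∀ x y : X, p (x + y) ≤ p x + p y)
    (f : X → EReal) (hfbot : ∀ y : X, f y ≠ ⊥) (hfne : ∃ y : X, f y ≠ ⊤)
    (x : X) (φ : X →ₗ[ℝ] ℝ) (hφ : φ ∈ dualConeBar p)
    (g : X → EReal) (hg : ∀ y : X, g y = f y - (φ y : EReal))
    (hmin : ∀ y : X, g x ≤ g y) (hfin : g x ≠ ⊤ ∧ g x ≠ ⊥) :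
    (f x ≠ ⊤ ∧ f x ≠ ⊥) ∧
    conjFn f φ = (φ x : EReal) - f x ∧
    biconjFn p f x = f x := by
  have hfxt : f x ≠ ⊤ := by
    intro h
    apply hfin.1
    rw [hg x, h, EReal.top_sub_coe]
  have hfxb : f x ≠ ⊥ := hfbot x
  obtain ⟨a, ha⟩ : ∃ a : ℝ, f x = (a : EReal) := ⟨(f x).toReal, (EReal.coe_toReal hfxt hfxb).symm⟩
  -- key inequality
  have key : ∀ y : X, (φ y : EReal) - f y ≤ ((φ x - a : ℝ) : EReal) := by
    intro y
    have h1 := hmin y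
    rw [hg x, hg y, ha] at h1
    by_cases hy : f y = ⊤
    · rw [hy]
      simp [EReal.coe_sub]
    · obtain ⟨b, hb⟩ : ∃ b : ℝ, f y = (b : EReal) :=
        ⟨(f y).toReal, (EReal.coe_toReal hy (hfbot y)).symm⟩
      rw [hb] at h1 ⊢
      norm_cast at h1 ⊢
      linarith
  have hconj : conjFn f φ = ((φ x - a : ℝ) : EReal) := by
    apply le_antisymm
    · exact iSup_le key
    · have := le_iSup (fun y => (φ y : EReal) - f y) x
      rw [ha, ← EReal.coe_sub] at this
      exact this
  refine ⟨⟨hfxt, hfxb⟩, ?_, ?_⟩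
  · rw [hconj, ha, ← EReal.coe_sub]
  · rw [ha]
    apply le_antisymm
    · apply iSup_le
      rintro ⟨ψ, hψ⟩
      have h1 : ((ψ x - a : ℝ) : EReal) ≤ conjFn f ψ := by
        have := le_iSup (fun y => (ψ y : EReal) - f y) x
        rwa [ha, ← EReal.coe_sub] at this
      calc ((ψ x : ℝ) : EReal) - conjFn f ψ
          ≤ ((ψ x : ℝ) : EReal) - ((ψ x - a : ℝ) : EReal) :=
            EReal.sub_le_sub le_rfl h1
        _ = (a : EReal) := by
            rw [← EReal.coe_sub]
            norm_num
    · have h2 : ((φ x : ℝ) : EReal) - conjFn f φ = (a : EReal) := by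
        rw [hconj, ← EReal.coe_sub]
        norm_num
      have := le_iSup (fun ψ : dualConeBar p =>
        (((ψ : X →ₗ[ℝ] ℝ) x : ℝ) : EReal) - conjFn f (ψ : X →ₗ[ℝ] ℝ)) ⟨φ, hφ⟩
      rw [h2] at this
      exact this
end

section
/- Let (X, p) be an asymmetrically normed space, f : X → ℝ ∪ {+∞} proper, x ∈ X, φ ∈ X̄*, g = f − φ. Suppose f is lower semicontinuous at x, f* is right Fréchet differentiable at φ with derivative equal to the evaluation map of x, and there exists a sequence (y_n) with g(y_n) → inf g and p(y_n − x) → 0. Then g(x) = inf g(X), and every sequence (y_n) with g(y_n) → g(x) satisfies p̄(y_n − x) = p(x − y_n) → 0. -/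
open Filter Topology

/-- The dual cone `X*` of `(X, p)`. -/
def dualCone {X : Type*} [AddCommGroup X] [Module ℝ X] (p : X → ℝ) : Set (X →ₗ[ℝ] ℝ) :=
  {φ | ∃ C : ℝ, 0 ≤ C ∧ ∀ y : X, φ y ≤ C * p y}

/-- The cone norm on `X̄*`: `‖ψ‖ = sup {ψ y : p (-y) < 1}`. -/
noncomputable def dualNormBar {X : Type*} [AddCommGroup X] [Module ℝ X] (p : X → ℝ)
    (φ : X →ₗ[ℝ] ℝ) : ℝ :=
  sSup ((fun y => φ y) '' {y : X | p (-y) < 1})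

lemma ereal_iInf_neg {ι : Sort*} (h : ι → EReal) : (⨅ i, -h i) = -⨆ i, h i := by
  refine le_antisymm ?_ (le_iInf fun i => EReal.neg_le_neg_iff.2 (le_iSup h i))
  have h1 : (⨆ i, h i) ≤ -(⨅ i, -h i) :=
    iSup_le fun i => EReal.le_neg_of_le_neg (iInf_le (fun i => -h i) i)
  have := EReal.neg_le_neg_iff.2 h1
  rwa [neg_neg] at this

lemma hahn_asym {X : Type*} [AddCommGroup X] [Module ℝ X] (p : X → ℝ)
    (hp0 : ∀ x : X, 0 ≤ p x)
    (hph : ∀ (r : ℝ) (x : X), 0 ≤ r → p (r • x) = r * p x)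
    (hpt : ∀ x y : X, p (x + y) ≤ p x + p y) (z : X) :
    ∃ ψ : X →ₗ[ℝ] ℝ, (∀ y, ψ y ≤ p (-y)) ∧ ψ z = p (-z) := by
  have hp00 : p 0 = 0 := by simpa using hph 0 0 le_rfl
  by_cases hz : z = 0
  · exact ⟨0, fun y => le_trans (le_of_eq rfl) (by simpa using hp0 (-y)), by
      simp [hz, hp00]⟩
  · have hf : ∀ w : (LinearPMap.mkSpanSingleton (K := ℝ) (σ := RingHom.id ℝ) z (p (-z)) hz).domain,
        (LinearPMap.mkSpanSingleton (K := ℝ) (σ := RingHom.id ℝ) z (p (-z)) hz) w ≤ p (-(w : X)) := by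
      rintro ⟨w, hw⟩
      have hw' := hw
      rw [LinearPMap.domain_mkSpanSingleton, Submodule.mem_span_singleton] at hw'
      obtain ⟨c, rfl⟩ := hw'
      have happ : (LinearPMap.mkSpanSingleton (K := ℝ) (σ := RingHom.id ℝ) z (p (-z)) hz) ⟨c • z, hw⟩ = c • p (-z) :=
        LinearPMap.mkSpanSingleton'_apply _ _ _ c _
      rw [happ]
      rcases le_or_gt 0 c with hc | hc
      · rw [show -(c • z) = c • (-z) by simp, hph c (-z) hc, smul_eq_mul]
      · have h1 : p (-(c • z)) = (-c) * p z := by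
          rw [show -(c • z) = (-c) • z by simp, hph (-c) z (by linarith)]
        rw [h1, smul_eq_mul]
        have := hp0 z; have := hp0 (-z)
        nlinarith
    obtain ⟨gl, hg1, hg2⟩ := exists_extension_of_le_sublinear
      (LinearPMap.mkSpanSingleton z (p (-z)) hz) (fun y => p (-y))
      (fun c hc y => by show p (-(c • y)) = c * p (-y); rw [← smul_neg, hph c (-y) hc.le])
      (fun a b => by show p (-(a + b)) ≤ p (-a) + p (-b); rw [neg_add]; exact hpt _ _)
      hf
    refine ⟨gl, hg2, ?_⟩
    have := hg1 ⟨z, Submodule.mem_span_singleton_self z⟩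
    rwa [LinearPMap.mkSpanSingleton_apply] at this

/-- Fréchet case, (i) ⟹ (ii): if `f` is lower semicontinuous at `x`, `f*`
is right Fréchet differentiable at `φ` with derivative the evaluation map of `x`, and some
minimising sequence of `g = f − φ` converges to `x` in `(X, p)`, then `g` attains its
infimum at `x` and every minimising sequence converges to `x` in `(X, p̄)`,
i.e. `p (x − y_n) → 0`. -/
theorem stmt10 {X : Type*} [AddCommGroup X] [Module ℝ X] (p : X → ℝ)
    (hp0 : ∀ x : X, 0 ≤ p x)
    (hpz : ∀ x : X, (p x = 0 ∧ p (-x) = 0) ↔ x = 0)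
    (hph : ∀ (r : ℝ) (x : X), 0 ≤ r → p (r • x) = r * p x)
    (hpt : ∀ x y : X, p (x + y) ≤ p x + p y)
    (f : X → EReal) (hfbot : ∀ y : X, f y ≠ ⊥) (hfne : ∃ y : X, f y ≠ ⊤)
    (x : X) (φ : X →ₗ[ℝ] ℝ) (hφ : φ ∈ dualConeBar p)
    (g : X → EReal) (hg : ∀ y : X, g y = f y - (φ y : EReal))
    (hlsc : @LowerSemicontinuousAt X EReal (ballTopology p) _ f x)
    (hreal : ∃ a : ℝ, conjFn f φ = (a : EReal))
    (hFrechet : ∀ ε : ℝ, 0 < ε → ∃ δ : ℝ, 0 < δ ∧ ∀ ψ ∈ dualConeBar p,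
      dualNormBar p ψ ≤ δ →
        conjFn f (φ + ψ) - conjFn f φ - (ψ x : EReal) ≤ ((ε * dualNormBar p ψ : ℝ) : EReal) ∧
        ((-(ε * dualNormBar p ψ) : ℝ) : EReal) ≤ conjFn f (φ + ψ) - conjFn f φ - (ψ x : EReal))
    (hseq : ∃ y : ℕ → X, Tendsto (fun n => g (y n)) atTop (nhds (⨅ z : X, g z)) ∧
      Tendsto (fun n => p (y n - x)) atTop (nhds 0)) :
    g x = ⨅ z : X, g z ∧
    ∀ y : ℕ → X, Tendsto (fun n => g (y n)) atTop (nhds (g x)) →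
      Tendsto (fun n => p (x - y n)) atTop (nhds 0) := by

  obtain ⟨a, ha⟩ := hreal
  have hp00 : p 0 = 0 := by simpa using hph 0 0 le_rfl
  have hgbot : ∀ z, g z ≠ ⊥ := by
    intro z
    rw [hg z, sub_eq_add_neg, ← EReal.coe_neg]
    simp [EReal.add_eq_bot_iff, hfbot z]
  have hinf : (⨅ z : X, g z) = ((-a : ℝ) : EReal) := by
    have heq : ∀ z, g z = -(((φ z : ℝ) : EReal) - f z) := by
      intro z
      rw [hg z, EReal.neg_sub (Or.inl (EReal.coe_ne_bot _)) (Or.inl (EReal.coe_ne_top _)),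
        sub_eq_add_neg, add_comm]
    calc (⨅ z : X, g z) = ⨅ z : X, -(((φ z : ℝ) : EReal) - f z) := by simp_rw [heq]
      _ = -⨆ z : X, (((φ z : ℝ) : EReal) - f z) := ereal_iInf_neg _
      _ = -(a : EReal) := by rw [show (⨆ z : X, (((φ z : ℝ) : EReal) - f z)) = conjFn f φ from rfl, ha]
      _ = ((-a : ℝ) : EReal) := (EReal.coe_neg a).symm
  -- key lemma
  have key : ∀ y : ℕ → X, Tendsto (fun n => g (y n)) atTop (nhds ((-a : ℝ) : EReal)) →
      Tendsto (fun n => p (x - y n)) atTop (nhds 0) := by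
    intro y hy
    rw [Metric.tendsto_atTop]
    intro ε hε
    obtain ⟨δ, hδpos, hδ⟩ := hFrechet (ε / 3) (by linarith)
    have hlt : ((-a : ℝ) : EReal) < ((-a + ε / 3 * δ : ℝ) : EReal) := by
      exact_mod_cast (by nlinarith : -a < -a + ε / 3 * δ)
    obtain ⟨N, hN⟩ := eventually_atTop.1 (hy.eventually_lt_const hlt)
    refine ⟨N, fun n hn => ?_⟩
    have hgn := hN n hn
    lift g (y n) to ℝ using ⟨ne_top_of_lt hgn, hgbot _⟩ with r hr
    have hrlt : r < -a + ε / 3 * δ := by exact_mod_cast hgn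
    have hfn : f (y n) = ((r + φ (y n) : ℝ) : EReal) := by
      have h1 := hg (y n)
      rw [← hr] at h1
      have := congrArg (fun t => t + ((φ (y n) : ℝ) : EReal)) h1.symm
      simpa [EReal.sub_add_cancel, ← EReal.coe_add] using this
    obtain ⟨ψ, hψle, hψz⟩ := hahn_asym p hp0 hph hpt (y n - x)
    rw [neg_sub] at hψz
    set ψ' : X →ₗ[ℝ] ℝ := δ • ψ with hψ'
    have hψ'app : ∀ w, ψ' w = δ * ψ w := fun w => rfl
    have hmem : ψ' ∈ dualConeBar p := by
      refine ⟨δ, hδpos.le, fun w => ?_⟩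
      rw [hψ'app]
      exact mul_le_mul_of_nonneg_left (hψle w) hδpos.le
    have hmem0 : (0 : ℝ) ∈ (fun y => ψ' y) '' {y : X | p (-y) < 1} := by
      exact ⟨0, by simp [hp00], by simp⟩
    have hbdd : ∀ b ∈ (fun y => ψ' y) '' {y : X | p (-y) < 1}, b ≤ δ := by
      rintro b ⟨w, hw, rfl⟩
      have h1 : ψ' w ≤ δ * p (-w) := by
        rw [hψ'app]; exact mul_le_mul_of_nonneg_left (hψle w) hδpos.le
      have h2 : δ * p (-w) ≤ δ * 1 := mul_le_mul_of_nonneg_left hw.le hδpos.le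
      simpa using h1.trans h2
    have hnorm_le : dualNormBar p ψ' ≤ δ := csSup_le ⟨0, hmem0⟩ hbdd
    have hnorm0 : 0 ≤ dualNormBar p ψ' := le_csSup ⟨δ, fun b hb => hbdd b hb⟩ hmem0
    obtain ⟨h1, -⟩ := hδ ψ' hmem hnorm_le
    rw [ha] at h1
    have hclb : ((φ (y n) + ψ' (y n) - (r + φ (y n)) : ℝ) : EReal) ≤ conjFn f (φ + ψ') := by
      have h2 := le_iSup (fun z => (((φ + ψ') z : ℝ) : EReal) - f z) (y n)
      rw [hfn] at h2
      have h3 : (((φ + ψ') (y n) : ℝ) : EReal) - ((r + φ (y n) : ℝ) : EReal)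
          = ((φ (y n) + ψ' (y n) - (r + φ (y n)) : ℝ) : EReal) := by
        rw [EReal.coe_sub]; norm_num [LinearMap.add_apply]
      rw [h3] at h2
      exact h2
    have hcne_top : conjFn f (φ + ψ') ≠ ⊤ := by
      intro hc
      rw [hc, EReal.top_sub_coe, EReal.top_sub_coe] at h1
      exact (EReal.coe_lt_top _).not_ge h1
    have hcne_bot : conjFn f (φ + ψ') ≠ ⊥ := by
      intro hc
      rw [hc] at hclb
      exact (not_le_of_gt (EReal.bot_lt_coe _)) hclb
    lift conjFn f (φ + ψ') to ℝ using ⟨hcne_top, hcne_bot⟩ with cr hcr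
    rw [← EReal.coe_sub, ← EReal.coe_sub, EReal.coe_le_coe_iff] at h1
    rw [EReal.coe_le_coe_iff] at hclb
    have hε3 : ε / 3 * dualNormBar p ψ' ≤ ε / 3 * δ :=
      mul_le_mul_of_nonneg_left hnorm_le (by linarith)
    have hsub : ψ (y n) - ψ x = p (x - y n) := by
      rw [← hψz, map_sub]
    have hmul : δ * p (x - y n) = δ * ψ (y n) - δ * ψ x := by
      rw [← hsub]; ring
    have hA : δ * ψ (y n) - r ≤ cr := by
      have := hclb
      rw [hψ'app] at this
      linarith
    have hB : cr - a - δ * ψ x ≤ ε / 3 * δ := by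
      have := h1
      rw [hψ'app] at this
      linarith
    have hfinal : δ * p (x - y n) < δ * (2 * ε / 3) := by
      rw [hmul]; nlinarith
    have hplt : p (x - y n) < 2 * ε / 3 := lt_of_mul_lt_mul_left hfinal hδpos.le
    rw [Real.dist_eq, sub_zero, abs_of_nonneg (hp0 _)]
    linarith
  -- part 1
  obtain ⟨y0, hy0g, hy0p⟩ := hseq
  rw [hinf] at hy0g
  have hy0p' := key y0 hy0g
  obtain ⟨C, hC0, hCle⟩ := hφ
  have hφ1 : ∀ n, φ (y0 n) - φ x ≤ C * p (x - y0 n) := by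
    intro n
    have := hCle (y0 n - x)
    rwa [map_sub, neg_sub] at this
  have hφ2 : ∀ n, -(C * p (y0 n - x)) ≤ φ (y0 n) - φ x := by
    intro n
    have := hCle (x - y0 n)
    rw [map_sub, neg_sub] at this
    linarith
  have hφconv : Tendsto (fun n => φ (y0 n) - φ x) atTop (nhds 0) := by
    have hup : Tendsto (fun n => C * p (x - y0 n)) atTop (nhds 0) := by
      simpa using hy0p'.const_mul C
    have hlo : Tendsto (fun n => -(C * p (y0 n - x))) atTop (nhds 0) := by
      simpa using (hy0p.const_mul C).neg
    exact tendsto_of_tendsto_of_tendsto_of_le_of_le hlo hup (fun n => hφ2 n) (fun n => hφ1 n)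
  have hφconv' : Tendsto (fun n => φ (y0 n)) atTop (nhds (φ x)) := by
    have := hφconv.add_const (φ x)
    simpa using this
  have hfx : f x ≤ ((-a + φ x : ℝ) : EReal) := by
    by_contra hcon
    push_neg at hcon
    obtain ⟨b, hb1, hb2⟩ := EReal.exists_between_coe_real hcon
    rw [EReal.coe_lt_coe_iff] at hb1
    set η : ℝ := (b - (-a + φ x)) / 2 with hη
    have hηpos : 0 < η := by rw [hη]; linarith
    have hconv : Tendsto y0 atTop (@nhds X (ballTopology p) x) := by
      rw [ballTopology, TopologicalSpace.tendsto_nhds_generateFrom_iff]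
      rintro s ⟨c, ρ, hρ, rfl⟩ hxs
      simp only [Set.mem_setOf_eq] at hxs
      have hev : ∀ᶠ n in atTop, p (y0 n - x) < ρ - p (x - c) :=
        hy0p.eventually_lt_const (by linarith)
      have : ∀ᶠ n in atTop, y0 n ∈ {y : X | p (y - c) < ρ} := by
        filter_upwards [hev] with n hn
        have h2 : p (y0 n - c) ≤ p (y0 n - x) + p (x - c) := by
          have := hpt (y0 n - x) (x - c)
          rwa [sub_add_sub_cancel] at this
        show p (y0 n - c) < ρ
        linarith
      exact this
    have hev2 : ∀ᶠ n in atTop, (b : EReal) < f (y0 n) := hconv.eventually (hlsc b hb2)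
    have hev3 : ∀ᶠ n in atTop, g (y0 n) < ((-a + η : ℝ) : EReal) :=
      hy0g.eventually_lt_const (by exact_mod_cast (by linarith : -a < -a + η))
    have hev4 : ∀ᶠ n in atTop, φ (y0 n) < φ x + η :=
      hφconv'.eventually_lt_const (by linarith)
    obtain ⟨n, h2, h3, h4⟩ := (hev2.and (hev3.and hev4)).exists
    lift g (y0 n) to ℝ using ⟨ne_top_of_lt h3, hgbot _⟩ with r hr
    have hr' : r < -a + η := by exact_mod_cast h3
    have hfn : f (y0 n) = ((r + φ (y0 n) : ℝ) : EReal) := by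
      have he1 := hg (y0 n)
      rw [← hr] at he1
      have := congrArg (fun t => t + ((φ (y0 n) : ℝ) : EReal)) he1.symm
      simpa [EReal.sub_add_cancel, ← EReal.coe_add] using this
    rw [hfn, EReal.coe_lt_coe_iff] at h2
    have hηdef : η = (b - (-a + φ x)) / 2 := rfl
    linarith
  have hgx : g x ≤ ((-a : ℝ) : EReal) := by
    rw [hg x]
    calc f x - ((φ x : ℝ) : EReal) ≤ ((-a + φ x : ℝ) : EReal) - ((φ x : ℝ) : EReal) :=
          EReal.sub_le_sub hfx le_rfl
      _ = ((-a : ℝ) : EReal) := by rw [← EReal.coe_sub]; norm_num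
  have hgxeq : g x = ((-a : ℝ) : EReal) := le_antisymm hgx (hinf ▸ iInf_le g x)
  refine ⟨by rw [hgxeq, hinf], fun y hy => ?_⟩
  rw [hgxeq] at hy
  exact key y hy
end

section
/- Let (X, p) be an asymmetrically normed space, f : X → ℝ ∪ {+∞} proper and convex, x ∈ X, φ ∈ X̄*, g = f − φ. Suppose g(x) = inf g(X) and every sequence (y_n) with g(y_n) → g(x) satisfies p(x − y_n) → 0. Then f is lower semicontinuous at x and f* is right Fréchet differentiable at φ with derivative equal to the evaluation map ψ ↦ ψ(x). -/
open Filter Topology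

lemma aux_norm {X : Type*} [AddCommGroup X] [Module ℝ X] (p : X → ℝ)
    (hp0 : ∀ x : X, 0 ≤ p x)
    (hph : ∀ (r : ℝ) (x : X), 0 ≤ r → p (r • x) = r * p x)
    (ψ : X →ₗ[ℝ] ℝ) (hψ : ψ ∈ dualConeBar p) :
    0 ≤ dualNormBar p ψ ∧ ∀ z : X, ψ z ≤ dualNormBar p ψ * p (-z) := by
  obtain ⟨C, hC0, hC⟩ := hψ
  have hp00 : p (0 : X) = 0 := by
    have := hph 0 0 le_rfl; simpa using this
  have hmem0 : (0 : X) ∈ {y : X | p (-y) < 1} := by simp [hp00]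
  have hbdd : BddAbove ((fun y => ψ y) '' {y : X | p (-y) < 1}) := by
    refine ⟨C, ?_⟩
    rintro r ⟨y, hy, rfl⟩
    have hy' : p (-y) < 1 := hy
    exact le_trans (hC y) (by nlinarith [hp0 (-y)])
  have hN0 : 0 ≤ dualNormBar p ψ := by
    have := le_csSup hbdd (Set.mem_image_of_mem _ hmem0)
    simpa [dualNormBar] using this
  refine ⟨hN0, fun z => ?_⟩
  have key : ∀ w : X, p (-w) < 1 → ψ w ≤ dualNormBar p ψ := fun w hw =>
    le_csSup hbdd (Set.mem_image_of_mem _ hw)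
  by_cases hz : p (-z) = 0
  · have hle : ∀ t : ℝ, 0 < t → t * ψ z ≤ dualNormBar p ψ := by
      intro t ht
      have h1 : p (-(t • z)) = 0 := by
        rw [← smul_neg, hph t (-z) ht.le, hz, mul_zero]
      have := key (t • z) (by rw [h1]; norm_num)
      simpa [map_smul] using this
    have hz0 : ψ z ≤ 0 := by
      by_contra h
      push_neg at h
      have := hle ((dualNormBar p ψ + 1) / ψ z) (by positivity)
      rw [div_mul_cancel₀ _ (ne_of_gt h)] at this
      linarith
    calc ψ z ≤ 0 := hz0
      _ = dualNormBar p ψ * p (-z) := by rw [hz, mul_zero]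
  · have hstep : ∀ η : ℝ, 0 < η → ψ z ≤ dualNormBar p ψ * (p (-z) + η) := by
      intro η hη
      have hq : 0 < p (-z) + η := by linarith [hp0 (-z)]
      have hmem : p (-((1 / (p (-z) + η)) • z)) < 1 := by
        rw [← smul_neg, hph _ (-z) (by positivity)]
        rw [div_mul_eq_mul_div, one_mul, div_lt_one hq]
        linarith
      have := key _ hmem
      rw [map_smul, smul_eq_mul] at this
      rw [div_mul_eq_mul_div, one_mul, div_le_iff₀ hq] at this
      linarith
    refine le_of_forall_pos_le_add fun ε hε => ?_
    by_cases hN : dualNormBar p ψ = 0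
    · have := hstep 1 one_pos; rw [hN] at this ⊢; simpa using this.trans (by linarith)
    · have hNpos : 0 < dualNormBar p ψ := lt_of_le_of_ne hN0 (Ne.symm hN)
      have := hstep (ε / dualNormBar p ψ) (by positivity)
      rw [mul_add, mul_div_cancel₀ _ (ne_of_gt hNpos)] at this
      linarith

/-- Fréchet case, (ii) ⟹ (i) for convex `f`: if `g = f − φ` attains its
infimum at `x` and every minimising sequence satisfies `p (x − y_n) → 0`, then `f` is lower
semicontinuous at `x` and `f*` is right Fréchet differentiable at `φ` with derivative the
evaluation map `ψ ↦ ψ x`. -/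
theorem stmt11 {X : Type*} [AddCommGroup X] [Module ℝ X] (p : X → ℝ)
    (hp0 : ∀ x : X, 0 ≤ p x)
    (hpz : ∀ x : X, (p x = 0 ∧ p (-x) = 0) ↔ x = 0)
    (hph : ∀ (r : ℝ) (x : X), 0 ≤ r → p (r • x) = r * p x)
    (hpt : ∀ x y : X, p (x + y) ≤ p x + p y)
    (f : X → EReal) (hfbot : ∀ y : X, f y ≠ ⊥) (hfne : ∃ y : X, f y ≠ ⊤)
    (hconv : ∀ y z : X, ∀ t : ℝ, 0 ≤ t → t ≤ 1 →
      f (t • y + (1 - t) • z) ≤ (t : EReal) * f y + ((1 - t : ℝ) : EReal) * f z)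
    (x : X) (φ : X →ₗ[ℝ] ℝ) (hφ : φ ∈ dualConeBar p)
    (g : X → EReal) (hg : ∀ y : X, g y = f y - (φ y : EReal))
    (hmin : g x = ⨅ z : X, g z)
    (hwp : ∀ y : ℕ → X, Tendsto (fun n => g (y n)) atTop (nhds (g x)) →
      Tendsto (fun n => p (x - y n)) atTop (nhds 0)) :
    @LowerSemicontinuousAt X EReal (ballTopology p) _ f x ∧
    (∃ a : ℝ, conjFn f φ = (a : EReal)) ∧
    (∀ ε : ℝ, 0 < ε → ∃ δ : ℝ, 0 < δ ∧ ∀ ψ ∈ dualConeBar p,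
      dualNormBar p ψ ≤ δ →
        conjFn f (φ + ψ) - conjFn f φ - (ψ x : EReal) ≤ ((ε * dualNormBar p ψ : ℝ) : EReal) ∧
        ((-(ε * dualNormBar p ψ) : ℝ) : EReal) ≤
          conjFn f (φ + ψ) - conjFn f φ - (ψ x : EReal)) := by
  have hp00 : p (0 : X) = 0 := by have := hph 0 0 le_rfl; simpa using this
  -- f x is real
  obtain ⟨y₀, hy₀⟩ := hfne
  have hgx_le : ∀ y : X, g x ≤ g y := fun y => hmin ▸ iInf_le _ y
  have hgy0 : g y₀ ≠ ⊤ := by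
    rw [hg y₀, ← EReal.coe_toReal hy₀ (hfbot y₀), ← EReal.coe_sub]
    exact EReal.coe_ne_top _
  have hgxtop : g x ≠ ⊤ := ne_top_of_le_ne_top hgy0 (hgx_le y₀)
  have hfxtop : f x ≠ ⊤ := fun h => hgxtop (by rw [hg x, h, EReal.top_sub_coe])
  set b : ℝ := (f x).toReal with hb
  have hfx : f x = (b : EReal) := (EReal.coe_toReal hfxtop (hfbot x)).symm
  set A : ℝ := b - φ x with hA
  have hgx : g x = (A : EReal) := by rw [hg x, hfx, ← EReal.coe_sub]
  -- real form of minimality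
  have hAle : ∀ (y : X) (e : ℝ), f y = (e : EReal) → A ≤ e - φ y := by
    intro y e he
    have := hgx_le y
    rw [hgx, hg y, he, ← EReal.coe_sub, EReal.coe_le_coe_iff] at this
    exact this
  -- value of the conjugate
  have hconj : conjFn f φ = ((-A : ℝ) : EReal) := by
    apply le_antisymm
    · refine iSup_le fun y => ?_
      by_cases hy : f y = ⊤
      · rw [hy, EReal.sub_top]; exact bot_le
      · have he : f y = (((f y).toReal : ℝ) : EReal) := (EReal.coe_toReal hy (hfbot y)).symm
        rw [he, ← EReal.coe_sub, EReal.coe_le_coe_iff]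
        have := hAle y _ he
        linarith
    · have h := le_iSup (fun y => (φ y : EReal) - f y) x
      rw [hfx, ← EReal.coe_sub] at h
      have : (-A : ℝ) = φ x - b := by rw [hA]; ring
      rw [this]
      exact h
  obtain ⟨Cφ, hCφ0, hCφ⟩ := hφ
  -- ball neighborhoods
  have hball : ∀ r : ℝ, 0 < r → {y : X | p (y - x) < r} ∈ @nhds X (ballTopology p) x := by
    intro r hr
    letI := ballTopology p
    refine IsOpen.mem_nhds ?_ (by simp [Set.mem_setOf_eq, sub_self, hp00, hr])
    exact TopologicalSpace.GenerateOpen.basic _ ⟨x, r, hr, rfl⟩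
  refine ⟨?_, ⟨-A, hconj⟩, ?_⟩
  · -- lower semicontinuity at x
    intro c hc
    rw [hfx] at hc
    induction c using EReal.rec with
    | bot =>
        exact Eventually.of_forall fun y => bot_lt_iff_ne_bot.2 (hfbot y)
    | coe c =>
        have hcb : c < b := EReal.coe_lt_coe_iff.1 hc
        set r : ℝ := (b - c) / (Cφ + 1) with hrdef
        have hr : 0 < r := div_pos (by linarith) (by linarith)
        refine Filter.mem_of_superset (hball r hr) fun y hy => ?_
        have hy' : p (y - x) < r := hy
        show (c : EReal) < f y
        by_cases hfy : f y = ⊤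
        · rw [hfy]; exact EReal.coe_lt_top c
        · have he : f y = (((f y).toReal : ℝ) : EReal) := (EReal.coe_toReal hfy (hfbot y)).symm
          set e : ℝ := (f y).toReal
          have h1 : A ≤ e - φ y := hAle y e he
          have h2 : φ x - φ y ≤ Cφ * p (y - x) := by
            have := hCφ (x - y)
            rwa [map_sub, neg_sub] at this
          rw [he, EReal.coe_lt_coe_iff]
          have h3 : Cφ * p (y - x) ≤ Cφ * r := by
            exact mul_le_mul_of_nonneg_left hy'.le hCφ0
          have h4 : Cφ * r < (Cφ + 1) * r := by nlinarith
          have h5 : (Cφ + 1) * r = b - c := by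
            rw [hrdef, mul_div_cancel₀]; positivity
          -- e ≥ A + φ y ≥ A + φ x - Cφ p(y-x) = b - Cφ p(y-x) > c
          have : b = A + φ x := by rw [hA]; ring
          linarith
    | top => exact absurd hc (not_lt.2 le_top)
  · -- Fréchet differentiability
    intro ε hε
    -- coercivity constant
    have F6 : ∃ c : ℝ, 0 < c ∧ ∀ y : X, ε ≤ p (x - y) → ((A + c : ℝ) : EReal) ≤ g y := by
      by_contra hcon
      push_neg at hcon
      have pick : ∀ n : ℕ, ∃ y : X, ε ≤ p (x - y) ∧ g y < ((A + 1 / (n + 1) : ℝ) : EReal) := by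
        intro n
        obtain ⟨z, hz1, hz2⟩ := hcon (1 / (n + 1)) (by positivity)
        exact ⟨z, hz1, hz2⟩
      choose y hy1 hy2 using pick
      set G : ℕ → ℝ := fun n => (g (y n)).toReal with hG
      have hgyn : ∀ n, g (y n) = ((G n : ℝ) : EReal) := by
        intro n
        refine (EReal.coe_toReal ?_ ?_).symm
        · exact ne_top_of_le_ne_top (EReal.coe_ne_top _) (hy2 n).le
        · intro h
          have := hgx_le (y n)
          rw [h, hgx, le_bot_iff] at this
          exact EReal.coe_ne_bot A this
      have hGlo : ∀ n, A ≤ G n := by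
        intro n
        have := hgx_le (y n)
        rw [hgx, hgyn n, EReal.coe_le_coe_iff] at this
        exact this
      have hGhi : ∀ n : ℕ, G n ≤ A + 1 / (n + 1) := by
        intro n
        have := (hy2 n).le
        rw [hgyn n, EReal.coe_le_coe_iff] at this
        exact this
      have htend : Tendsto G atTop (nhds A) := by
        have h1 : Tendsto (fun n : ℕ => A + 1 / (n + 1 : ℝ)) atTop (nhds (A + 0)) :=
          tendsto_const_nhds.add tendsto_one_div_add_atTop_nhds_zero_nat
        rw [add_zero] at h1
        exact tendsto_of_tendsto_of_tendsto_of_le_of_le tendsto_const_nhds h1 hGlo hGhi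
      have htendE : Tendsto (fun n => g (y n)) atTop (nhds (g x)) := by
        rw [hgx]
        have := EReal.tendsto_coe.2 htend
        exact Tendsto.congr (fun n => (hgyn n).symm) this
      have hp_tend := hwp y htendE
      have : ∀ᶠ n in atTop, p (x - y n) < ε :=
        hp_tend.eventually (eventually_lt_nhds hε)
      obtain ⟨n, hn⟩ := this.exists
      exact absurd (hy1 n) (not_le.2 hn)
    obtain ⟨c, hc0, hcoer⟩ := F6
    refine ⟨c / ε, by positivity, fun ψ hψmem hψδ => ?_⟩
    obtain ⟨hN0, hNb⟩ := aux_norm p hp0 hph ψ hψmem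
    set N : ℝ := dualNormBar p ψ with hNdef
    -- upper bound on the perturbed conjugate
    have hup : conjFn f (φ + ψ) ≤ ((-A + ψ x + ε * N : ℝ) : EReal) := by
      refine iSup_le fun y => ?_
      by_cases hy : f y = ⊤
      · rw [hy, EReal.sub_top]; exact bot_le
      · have he : f y = (((f y).toReal : ℝ) : EReal) := (EReal.coe_toReal hy (hfbot y)).symm
        set e : ℝ := (f y).toReal
        have hGA : A ≤ e - φ y := hAle y e he
        set G : ℝ := e - φ y with hGdef
        rw [he, ← EReal.coe_sub, EReal.coe_le_coe_iff, LinearMap.add_apply]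
        -- need: φ y + ψ y - e ≤ -A + ψ x + ε N, i.e. ψ(y-x) ≤ (G - A) + ε N
        have hψyx : ψ y - ψ x ≤ N * p (x - y) := by
          have := hNb (y - x)
          rwa [map_sub, neg_sub] at this
        set q : ℝ := p (x - y) with hq
        by_cases hqε : q ≤ ε
        · have h1 : N * q ≤ N * ε := mul_le_mul_of_nonneg_left hqε hN0
          have : ψ y - ψ x ≤ ε * N := by nlinarith
          linarith
        · push_neg at hqε
          have hqpos : 0 < q := lt_trans hε hqε
          set t : ℝ := ε / q with ht
          have ht0 : 0 < t := by positivity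
          have ht1 : t ≤ 1 := by
            rw [ht, div_le_one hqpos]; exact hqε.le
          set z : X := t • y + (1 - t) • x with hz
          have hxz : x - z = t • (x - y) := by
            rw [hz]; module
          have hpz : p (x - z) = ε := by
            rw [hxz, hph t (x - y) ht0.le, ← hq, ht, div_mul_cancel₀ _ (ne_of_gt hqpos)]
          have hgz := hcoer z (by rw [hpz])
          have hfz_le : f z ≤ ((t * e + (1 - t) * b : ℝ) : EReal) := by
            have := hconv y x t ht0.le ht1
            rw [he, hfx] at this
            rw [← EReal.coe_mul, ← EReal.coe_mul, ← EReal.coe_add] at this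
            exact this
          have hfztop : f z ≠ ⊤ :=
            ne_top_of_le_ne_top (EReal.coe_ne_top _) hfz_le
          have hd : f z = (((f z).toReal : ℝ) : EReal) := (EReal.coe_toReal hfztop (hfbot z)).symm
          set d : ℝ := (f z).toReal
          have hd_le : d ≤ t * e + (1 - t) * b := by
            rw [hd, EReal.coe_le_coe_iff] at hfz_le; exact hfz_le
          have hφz : φ z = t * φ y + (1 - t) * φ x := by
            rw [hz, map_add, map_smul, map_smul, smul_eq_mul, smul_eq_mul]
          have hgz' : A + c ≤ d - φ z := by
            rw [hg z, hd, ← EReal.coe_sub, EReal.coe_le_coe_iff] at hgz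
            exact hgz
          -- A + c ≤ t G + (1 - t) A
          have hkey : c ≤ t * (G - A) := by
            have hbA : b - φ x = A := by rw [hA]
            nlinarith [hd_le, hgz', hφz]
          -- G - A ≥ (c/ε) q ≥ N q
          have hGAq : (c / ε) * q ≤ G - A := by
            rw [ht] at hkey
            rw [div_mul_eq_mul_div, div_le_iff₀ hε]
            have := hkey
            rw [div_mul_eq_mul_div, le_div_iff₀ hqpos] at this
            nlinarith
          have hNq : N * q ≤ (c / ε) * q := mul_le_mul_of_nonneg_right hψδ hqpos.le
          have : ψ y - ψ x ≤ G - A := le_trans hψyx (le_trans hNq hGAq)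
          nlinarith [mul_nonneg hε.le hN0]
    -- lower bound on the perturbed conjugate
    have hlow : ((ψ x - A : ℝ) : EReal) ≤ conjFn f (φ + ψ) := by
      have h := le_iSup (fun y => (((φ + ψ) y : ℝ) : EReal) - f y) x
      rw [hfx, LinearMap.add_apply, ← EReal.coe_sub] at h
      have heq : (ψ x - A : ℝ) = φ x + ψ x - b := by rw [hA]; ring
      rw [heq]
      exact h
    -- the perturbed conjugate is real
    have hstop : conjFn f (φ + ψ) ≠ ⊤ := ne_top_of_le_ne_top (EReal.coe_ne_top _) hup
    have hsbot : conjFn f (φ + ψ) ≠ ⊥ := by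
      intro h
      rw [h, le_bot_iff] at hlow
      exact EReal.coe_ne_bot _ hlow
    set s : ℝ := (conjFn f (φ + ψ)).toReal with hs
    have hseq : conjFn f (φ + ψ) = ((s : ℝ) : EReal) := (EReal.coe_toReal hstop hsbot).symm
    have hs_up : s ≤ -A + ψ x + ε * N := by
      rw [hseq, EReal.coe_le_coe_iff] at hup; exact hup
    have hs_lo : ψ x - A ≤ s := by
      rw [hseq, EReal.coe_le_coe_iff] at hlow; exact hlow
    have hdiff : conjFn f (φ + ψ) - conjFn f φ - (ψ x : EReal)
        = ((s - (-A) - ψ x : ℝ) : EReal) := by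
      rw [hseq, hconj, ← EReal.coe_sub, ← EReal.coe_sub]
    rw [hdiff]
    constructor
    · rw [EReal.coe_le_coe_iff]; linarith
    · rw [EReal.coe_le_coe_iff]
      have : 0 ≤ ε * N := mul_nonneg hε.le hN0
      linarith
end

section
/- Let (X, p) be an asymmetrically normed space, f : X → ℝ ∪ {+∞} proper and convex, x ∈ X, φ ∈ X̄*, g = f − φ. If g(x) = inf g(X) and every minimising sequence of g converges weakly to x in X̄ (i.e. lim sup_n ψ(y_n − x) ≤ 0 for all ψ ∈ X̄* whenever g(y_n) → g(x)), then for every ψ ∈ X̄*, lim_{t↘0} (1/t)[f*(φ + tψ) − f*(φ)] = ψ(x), i.e. f* is right Gâteaux differentiable at φ with derivative the evaluation map of x. -/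
open Filter Topology

/-- Gâteaux case, (ii) ⟹ (i) for convex `f`: if `g = f − φ` attains its
infimum at `x` and every minimising sequence converges weakly to `x` in `X̄`, then for every
`ψ ∈ X̄*` the right-hand difference quotient of `f*` at `φ` in direction `ψ` tends to
`ψ x`, i.e. `f*` is right Gâteaux differentiable at `φ` with derivative `ψ ↦ ψ x`. -/
theorem stmt13 {X : Type*} [AddCommGroup X] [Module ℝ X] (p : X → ℝ)
    (hp0 : ∀ x : X, 0 ≤ p x)
    (hpz : ∀ x : X, (p x = 0 ∧ p (-x) = 0) ↔ x = 0)
    (hph : ∀ (r : ℝ) (x : X), 0 ≤ r → p (r • x) = r * p x)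
    (hpt : ∀ x y : X, p (x + y) ≤ p x + p y)
    (f : X → EReal) (hfbot : ∀ y : X, f y ≠ ⊥) (hfne : ∃ y : X, f y ≠ ⊤)
    (hconv : ∀ y z : X, ∀ t : ℝ, 0 ≤ t → t ≤ 1 →
      f (t • y + (1 - t) • z) ≤ (t : EReal) * f y + ((1 - t : ℝ) : EReal) * f z)
    (x : X) (φ : X →ₗ[ℝ] ℝ) (hφ : φ ∈ dualConeBar p)
    (g : X → EReal) (hg : ∀ y : X, g y = f y - (φ y : EReal))
    (hmin : g x = ⨅ z : X, g z)
    (hwp : ∀ y : ℕ → X, Tendsto (fun n => g (y n)) atTop (nhds (g x)) →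
      ∀ ψ ∈ dualConeBar p, Filter.limsup (fun n => ψ (y n - x)) atTop ≤ 0) :
    (∃ a : ℝ, conjFn f φ = (a : EReal)) ∧
    ∀ ψ ∈ dualConeBar p, ∀ ε : ℝ, 0 < ε → ∃ δ : ℝ, 0 < δ ∧
      ∀ t : ℝ, 0 < t → t < δ →
        conjFn f (φ + t • ψ) - conjFn f φ ≤ ((t * (ψ x + ε) : ℝ) : EReal) ∧
        ((t * (ψ x - ε) : ℝ) : EReal) ≤ conjFn f (φ + t • ψ) - conjFn f φ := by
  classical
  obtain ⟨y₀, hy₀⟩ := hfne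
  have hgx_le : ∀ z, g x ≤ g z := fun z => hmin ▸ iInf_le _ z
  have hfy₀ : f y₀ = ((f y₀).toReal : EReal) := (EReal.coe_toReal hy₀ (hfbot y₀)).symm
  have hgx_lt_top : g x < ⊤ := by
    refine lt_of_le_of_lt (hgx_le y₀) ?_
    rw [hg, hfy₀, ← EReal.coe_sub]
    exact EReal.coe_lt_top _
  have hfxt : f x ≠ ⊤ := by
    intro h
    rw [hg, h, EReal.top_sub_coe] at hgx_lt_top
    exact (lt_irrefl _ hgx_lt_top)
  set fxr : ℝ := (f x).toReal with hfxr
  have hfx : f x = (fxr : EReal) := (EReal.coe_toReal hfxt (hfbot x)).symm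
  set gxr : ℝ := fxr - φ x with hgxr
  have hgx : g x = (gxr : EReal) := by rw [hg, hfx, ← EReal.coe_sub]
  set A : ℝ := φ x - fxr with hAdef
  have hA : conjFn f φ = (A : EReal) := by
    apply le_antisymm
    · apply iSup_le
      intro y
      by_cases hyt : f y = ⊤
      · rw [hyt, EReal.sub_top]; exact bot_le
      · have hy : f y = ((f y).toReal : EReal) := (EReal.coe_toReal hyt (hfbot y)).symm
        rw [hy, ← EReal.coe_sub, EReal.coe_le_coe_iff]
        have h2 := hgx_le y
        rw [hgx, hg y, hy, ← EReal.coe_sub, EReal.coe_le_coe_iff] at h2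
        simp only [hAdef, hgxr] at *
        linarith
    · have : (A : EReal) = (φ x : EReal) - f x := by rw [hfx, ← EReal.coe_sub]
      rw [this]
      exact le_iSup (fun y => ((φ y : EReal) - f y)) x
  refine ⟨⟨A, hA⟩, ?_⟩
  intro ψ hψ ε hε
  -- the lower bound holds for every t > 0
  have hLB : ∀ t : ℝ, 0 < t →
      ((t * (ψ x - ε) : ℝ) : EReal) ≤ conjFn f (φ + t • ψ) - conjFn f φ := by
    intro t ht
    rw [hA]
    have h1 : ((A + t * ψ x : ℝ) : EReal) ≤ conjFn f (φ + t • ψ) := by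
      have : ((A + t * ψ x : ℝ) : EReal) = (((φ + t • ψ) x : ℝ) : EReal) - f x := by
        rw [hfx, ← EReal.coe_sub, EReal.coe_eq_coe_iff]
        simp only [hAdef, LinearMap.add_apply, LinearMap.smul_apply, smul_eq_mul]
        ring
      rw [this]
      exact le_iSup (fun y => (((φ + t • ψ) y : ℝ) : EReal) - f y) x
    calc ((t * (ψ x - ε) : ℝ) : EReal) ≤ ((t * ψ x : ℝ) : EReal) := by
          rw [EReal.coe_le_coe_iff]; nlinarith
      _ = ((A + t * ψ x : ℝ) : EReal) - (A : EReal) := by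
          rw [← EReal.coe_sub]; norm_num
      _ ≤ _ := EReal.sub_le_sub h1 le_rfl
  by_contra hcon
  push_neg at hcon
  have hstep : ∀ n : ℕ, ∃ t : ℝ, 0 < t ∧ t < 1 / (n + 1) ∧
      ((A + t * (ψ x + ε) : ℝ) : EReal) < conjFn f (φ + t • ψ) := by
    intro n
    obtain ⟨t, ht0, htδ, hfail⟩ := hcon (1 / (n + 1)) (by positivity)
    refine ⟨t, ht0, htδ, ?_⟩
    have hnot : ¬ (conjFn f (φ + t • ψ) - conjFn f φ ≤ ((t * (ψ x + ε) : ℝ) : EReal)) := by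
      intro hle
      exact absurd (hLB t ht0) (not_le.mpr (hfail hle))
    rw [not_le, hA] at hnot
    have := (EReal.lt_sub_iff_add_lt (Or.inl (EReal.coe_ne_bot A))
      (Or.inl (EReal.coe_ne_top A))).mp hnot
    calc ((A + t * (ψ x + ε) : ℝ) : EReal)
        = ((t * (ψ x + ε) : ℝ) : EReal) + (A : EReal) := by
          rw [← EReal.coe_add, EReal.coe_eq_coe_iff]; ring
      _ < _ := this
  choose t ht0 htsm hbig using hstep
  have hy' : ∀ n : ℕ, ∃ y : X,
      ((A + t n * (ψ x + ε) : ℝ) : EReal) < (((φ + t n • ψ) y : ℝ) : EReal) - f y := by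
    intro n
    exact lt_iSup_iff.mp (hbig n)
  choose y hy using hy'
  -- f (y n) is real
  have hfyt : ∀ n, f (y n) ≠ ⊤ := by
    intro n h
    have := hy n
    rw [h, EReal.sub_top] at this
    exact absurd this (not_lt.mpr bot_le)
  have hfy : ∀ n, f (y n) = (((f (y n)).toReal : ℝ) : EReal) :=
    fun n => (EReal.coe_toReal (hfyt n) (hfbot (y n))).symm
  set r : ℕ → ℝ := fun n => (f (y n)).toReal with hrdef
  have hineq : ∀ n, A + t n * (ψ x + ε) < φ (y n) + t n * ψ (y n) - r n := by
    intro n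
    have := hy n
    rw [hfy n, ← EReal.coe_sub, EReal.coe_lt_coe_iff] at this
    simpa [LinearMap.add_apply, LinearMap.smul_apply, smul_eq_mul] using this
  set G : ℕ → ℝ := fun n => r n - φ (y n) with hGdef
  have hD0 : ∀ n, 0 ≤ G n + A := by
    intro n
    have h2 := hgx_le (y n)
    rw [hgx, hg (y n), hfy n, ← EReal.coe_sub, EReal.coe_le_coe_iff] at h2
    simp only [hAdef, hgxr, hGdef]
    linarith
  set E : ℕ → ℝ := fun n => ψ (y n) - ψ x with hEdef
  have hkey : ∀ n, G n + A < t n * (E n - ε) := by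
    intro n
    have := hineq n
    simp only [hGdef, hEdef]
    nlinarith [this]
  have hEε : ∀ n, ε < E n := by
    intro n
    have h1 := hkey n
    have h2 := hD0 n
    have h3 := ht0 n
    nlinarith
  have hE0 : ∀ n, 0 < E n := fun n => lt_trans hε (hEε n)
  set s : ℕ → ℝ := fun n => ε / E n with hsdef
  have hs0 : ∀ n, 0 < s n := fun n => div_pos hε (hE0 n)
  have hs1 : ∀ n, s n ≤ 1 := by
    intro n
    rw [hsdef]
    exact (div_le_one (hE0 n)).mpr (le_of_lt (hEε n))
  set z : ℕ → X := fun n => s n • y n + (1 - s n) • x with hzdef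
  -- ψ (z n - x) = ε
  have hψz : ∀ n, ψ (z n - x) = ε := by
    intro n
    have hzx : z n - x = s n • (y n - x) := by
      simp [hzdef, smul_sub, sub_smul, one_smul]
      abel
    rw [hzx, map_smul, smul_eq_mul, map_sub]
    show ε / E n * (ψ (y n) - ψ x) = ε
    rw [show ψ (y n) - ψ x = E n from rfl, div_mul_cancel₀ _ (ne_of_gt (hE0 n))]
  -- f (z n) bound by convexity
  have hfz_le : ∀ n, f (z n) ≤ ((s n * r n + (1 - s n) * fxr : ℝ) : EReal) := by
    intro n
    have := hconv (y n) x (s n) (le_of_lt (hs0 n)) (hs1 n)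
    rw [hfy n, hfx] at this
    calc f (z n) ≤ ((s n : ℝ) : EReal) * ((r n : ℝ) : EReal)
          + (((1 - s n : ℝ)) : EReal) * ((fxr : ℝ) : EReal) := this
      _ = ((s n * r n + (1 - s n) * fxr : ℝ) : EReal) := by
          rw [← EReal.coe_mul, ← EReal.coe_mul, ← EReal.coe_add]
  have hfzt : ∀ n, f (z n) ≠ ⊤ := by
    intro n h
    have := hfz_le n
    rw [h] at this
    exact absurd this (not_le.mpr (EReal.coe_lt_top _))
  have hfz : ∀ n, f (z n) = (((f (z n)).toReal : ℝ) : EReal) :=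
    fun n => (EReal.coe_toReal (hfzt n) (hfbot (z n))).symm
  set w : ℕ → ℝ := fun n => (f (z n)).toReal - φ (z n) with hwdef
  have hgz : ∀ n, g (z n) = ((w n : ℝ) : EReal) := by
    intro n
    rw [hg, hfz n, ← EReal.coe_sub]
  have hφz : ∀ n, φ (z n) = s n * φ (y n) + (1 - s n) * φ x := by
    intro n
    simp [hzdef, map_add, map_smul, smul_eq_mul]
  have hw_lb : ∀ n, gxr ≤ w n := by
    intro n
    have h2 := hgx_le (z n)
    rw [hgx, hgz n, EReal.coe_le_coe_iff] at h2
    exact h2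
  have hw_ub : ∀ n, w n ≤ gxr + ε / (n + 1) := by
    intro n
    have h1 := hfz_le n
    rw [hfz n, EReal.coe_le_coe_iff] at h1
    have h2 : w n ≤ gxr + s n * (G n + A) := by
      have hphi := hφz n
      have e1 : w n = (f (z n)).toReal - φ (z n) := rfl
      have e2 : G n = r n - φ (y n) := rfl
      have e3 : gxr = fxr - φ x := rfl
      have e4 : A = φ x - fxr := rfl
      rw [e1, e2, e3, e4, hphi]
      nlinarith [hs0 n, h1]
    have h3 : s n * (G n + A) ≤ ε * t n := by
      have hk := hkey n
      have hEn := hE0 n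
      have hsn := hs0 n
      have : G n + A < t n * E n := by nlinarith [ht0 n, hε]
      calc s n * (G n + A) ≤ s n * (t n * E n) := by nlinarith
        _ = ε * t n := by rw [hsdef]; field_simp
    have h4 : ε * t n ≤ ε / (n + 1) := by
      have h5 := mul_le_mul_of_nonneg_left (le_of_lt (htsm n)) (le_of_lt hε)
      rw [mul_one_div] at h5
      exact h5
    calc w n ≤ gxr + s n * (G n + A) := h2
      _ ≤ gxr + ε * t n := by linarith
      _ ≤ gxr + ε / (n + 1) := by linarith
  -- w tends to gxr
  have hw_tendsto : Tendsto w atTop (nhds gxr) := by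
    apply tendsto_of_tendsto_of_tendsto_of_le_of_le (g := fun _ => gxr)
      (h := fun n : ℕ => gxr + ε / (n + 1))
    · exact tendsto_const_nhds
    · have : Tendsto (fun n : ℕ => ε / (n + 1)) atTop (nhds 0) := by
        have h0 : Tendsto (fun n : ℕ => 1 / ((n : ℝ) + 1)) atTop (nhds 0) := tendsto_one_div_add_atTop_nhds_zero_nat
        have := h0.const_mul ε
        simpa [mul_one_div, div_eq_mul_inv] using this
      simpa using tendsto_const_nhds.add this
    · exact hw_lb
    · exact hw_ub
  have hgz_tendsto : Tendsto (fun n => g (z n)) atTop (nhds (g x)) := by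
    rw [hgx]
    have := (EReal.tendsto_coe (m := w) (a := gxr)).mpr hw_tendsto
    exact this.congr (fun n => (hgz n).symm)
  have hlim := hwp z hgz_tendsto ψ hψ
  have : Filter.limsup (fun n => ψ (z n - x)) atTop = ε := by
    have : (fun n => ψ (z n - x)) = fun _ : ℕ => ε := funext hψz
    rw [this, Filter.limsup_const]
  rw [this] at hlim
  linarith
end

section
/- Let δ : (0,∞) → (0,∞] be arbitrary and define α(t) = t·inf{ε > 0 : δ(ε) ≥ t} for t ≥ 0 (with inf ∅ = +∞), and α#(s) = sup_{t≥0}[t·s − α(t)]. Then α# is nonnegative, nondecreasing, and for every s > 0, α#(s) ≥ (s/2)·δ(s/2) > 0. -/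
open Filter Topology Set

/-- given arbitrary `δ : (0,∞) → (0,∞]`, set
`α t = t · inf {ε > 0 : δ ε ≥ t}` (with `inf ∅ = +∞`) and `α#(s) = sup_{t ≥ 0} [t·s − α t]`.
Then `α#` is nonnegative, nondecreasing, and for every `s > 0`,
`α#(s) ≥ (s/2)·δ(s/2) > 0`. -/
theorem stmt16 (δ : ℝ → EReal) (hδ : ∀ ε : ℝ, 0 < ε → 0 < δ ε)
    (α : ℝ → EReal)
    (hα : ∀ t : ℝ, 0 ≤ t →
      α t = (t : EReal) * sInf {e : EReal | ∃ ε : ℝ, 0 < ε ∧ (t : EReal) ≤ δ ε ∧ e = (ε : EReal)})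
    (αh : ℝ → EReal)
    (hαh : ∀ s : ℝ, αh s = ⨆ t : {t : ℝ // 0 ≤ t}, (((t : ℝ) * s : ℝ) : EReal) - α t) :
    (∀ s : ℝ, 0 ≤ s → 0 ≤ αh s) ∧
    (∀ s t : ℝ, 0 ≤ s → s ≤ t → αh s ≤ αh t) ∧
    (∀ s : ℝ, 0 < s →
      (0 : EReal) < ((s / 2 : ℝ) : EReal) * δ (s / 2) ∧
      ((s / 2 : ℝ) : EReal) * δ (s / 2) ≤ αh s) := by
  -- α 0 = 0
  have hα0 : α 0 = 0 := by
    rw [hα 0 le_rfl]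
    simp
  -- key helper: if 0 ≤ t and ↑t ≤ δ (s/2) with 0 < s, then ↑(t*(s/2)) ≤ αh s
  have key : ∀ s : ℝ, 0 < s → ∀ t : ℝ, 0 ≤ t → (t : EReal) ≤ δ (s / 2) →
      ((t * (s / 2) : ℝ) : EReal) ≤ αh s := by
    intro s hs t ht htδ
    rw [hαh s]
    refine le_trans ?_ (le_iSup _ (⟨t, ht⟩ : {t : ℝ // 0 ≤ t}))
    -- bound α t
    set S := {e : EReal | ∃ ε : ℝ, 0 < ε ∧ (t : EReal) ≤ δ ε ∧ e = (ε : EReal)} with hS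
    have hmem : ((s / 2 : ℝ) : EReal) ∈ S := ⟨s / 2, by positivity, htδ, rfl⟩
    have hinf_le : sInf S ≤ ((s / 2 : ℝ) : EReal) := sInf_le hmem
    have hinf_nonneg : (0 : EReal) ≤ sInf S := by
      refine le_sInf ?_
      rintro e ⟨ε, hε, -, rfl⟩
      exact_mod_cast hε.le
    have hαt_le : α t ≤ ((t * (s / 2) : ℝ) : EReal) := by
      rw [hα t ht, EReal.coe_mul]
      exact mul_le_mul_of_nonneg_left hinf_le (by exact_mod_cast ht)
    have hαt_nonneg : (0 : EReal) ≤ α t := by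
      rw [hα t ht]
      exact mul_nonneg (by exact_mod_cast ht) hinf_nonneg
    -- α t is a finite real
    obtain ⟨a, ha⟩ : ∃ a : ℝ, α t = (a : EReal) := by
      lift α t to ℝ using ⟨ne_top_of_le_ne_top (EReal.coe_ne_top _) hαt_le,
        ne_bot_of_le_ne_bot (by simp) hαt_nonneg⟩ with a
      exact ⟨a, rfl⟩
    rw [ha] at hαt_le
    rw [ha, ← EReal.coe_sub]
    apply EReal.coe_le_coe_iff.2
    have : a ≤ t * (s / 2) := by exact_mod_cast hαt_le
    nlinarith
  refine ⟨?_, ?_, ?_⟩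
  · intro s hs
    rw [hαh s]
    refine le_trans ?_ (le_iSup _ (⟨0, le_rfl⟩ : {t : ℝ // 0 ≤ t}))
    simp [hα0]
  · intro s t hs hst
    rw [hαh s, hαh t]
    refine iSup_mono fun u => ?_
    refine EReal.sub_le_sub ?_ le_rfl
    exact_mod_cast mul_le_mul_of_nonneg_left hst u.2
  · intro s hs
    have hδpos := hδ (s / 2) (by positivity)
    have hcoe_pos : (0 : EReal) < ((s / 2 : ℝ) : EReal) := by exact_mod_cast (by positivity : (0:ℝ) < s / 2)
    refine ⟨EReal.mul_pos hcoe_pos hδpos, ?_⟩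
    rcases eq_or_ne (δ (s / 2)) ⊤ with htop | hne
    · rw [htop, EReal.mul_top_of_pos hcoe_pos]
      rw [top_le_iff, EReal.eq_top_iff_forall_lt]
      intro y
      set t := max 0 (2 * (y + 1) / s) with ht
      have ht0 : 0 ≤ t := le_max_left _ _
      have h1 : ((t * (s / 2) : ℝ) : EReal) ≤ αh s :=
        key s hs t ht0 (htop ▸ le_top)
      refine lt_of_lt_of_le ?_ h1
      apply EReal.coe_lt_coe_iff.2
      have h2 : 2 * (y + 1) / s ≤ t := le_max_right _ _
      have h3 : (2 * (y + 1) / s) * (s / 2) = y + 1 := by field_simp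
      nlinarith [mul_le_mul_of_nonneg_right h2 (by positivity : (0:ℝ) ≤ s / 2), le_max_left 0 (2 * (y + 1) / s)]
    · have hnb : δ (s / 2) ≠ ⊥ := ne_bot_of_le_ne_bot (by simp) hδpos.le
      obtain ⟨d, hd⟩ : ∃ d : ℝ, δ (s / 2) = (d : EReal) := by
        lift δ (s / 2) to ℝ using ⟨hne, hnb⟩ with d
        exact ⟨d, rfl⟩
      have hd0 : 0 ≤ d := by
        have := hδpos.le; rw [hd] at this; exact_mod_cast this
      have h1 : ((d * (s / 2) : ℝ) : EReal) ≤ αh s := key s hs d hd0 (hd ▸ le_rfl)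
      rw [hd, ← EReal.coe_mul]
      convert h1 using 2
      ring
end

section
/- Let X = ℓ² (real square-summable sequences) with asymmetric norm p(x) = (Σ_n max{0, x_n}²)^{1/2}, and let f(x) = p̄(x)² where p̄(x) = p(−x). Then for every y ∈ ℓ² with y_n < 0 for all n, the convex conjugate satisfies f*(y) := sup_{x∈ℓ²}[⟨y,x⟩ − p̄(x)²] = p̄(y)²/4. -/
/-- `p̄(x)² = Σ_n max {0, −x_n}²` on `ℓ²`, the square of the conjugate asymmetric norm. -/
noncomputable def pbarSq (x : lp (fun _ : ℕ => ℝ) 2) : ℝ :=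
  ∑' n : ℕ, max 0 (-(x n)) ^ 2

lemma summable_sq (x : lp (fun _ : ℕ => ℝ) 2) : Summable (fun n : ℕ => (x n) ^ 2) := by
  have := lp.summable_inner (𝕜 := ℝ) x x
  simpa [RCLike.inner_apply, sq] using this

lemma summable_pbar (x : lp (fun _ : ℕ => ℝ) 2) :
    Summable (fun n : ℕ => max 0 (-(x n)) ^ 2) := by
  refine (summable_sq x).of_nonneg_of_le (fun n => by positivity) (fun n => ?_)
  rcases le_or_gt 0 (x n) with h | h
  · simp [max_eq_left (by linarith : -(x n) ≤ 0)]
    positivity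
  · rw [max_eq_right (by linarith : (0:ℝ) ≤ -(x n)), neg_sq]

lemma pbarSq_eq (y : lp (fun _ : ℕ => ℝ) 2) (hy : ∀ n : ℕ, y n < 0) :
    pbarSq y = ∑' n : ℕ, (y n) ^ 2 := by
  unfold pbarSq
  refine tsum_congr fun n => ?_
  rw [max_eq_right (by linarith [hy n] : (0:ℝ) ≤ -(y n)), neg_sq]

/-- for `X = ℓ²` with asymmetric norm `p(x) = (Σ max{0,x_n}²)^{1/2}` and
`f = p̄²`, for every `y ∈ ℓ²` with all coordinates negative,
`f*(y) = sup_x [⟨y,x⟩ − p̄(x)²] = p̄(y)²/4`. -/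
theorem stmt17 (y : lp (fun _ : ℕ => ℝ) 2) (hy : ∀ n : ℕ, y n < 0) :
    sSup {r : ℝ | ∃ x : lp (fun _ : ℕ => ℝ) 2, r = inner (𝕜 := ℝ) y x - pbarSq x} =
      pbarSq y / 4 := by
  have hpy : pbarSq y = ∑' n : ℕ, (y n) ^ 2 := pbarSq_eq y hy
  -- upper bound
  have hub : ∀ r ∈ {r : ℝ | ∃ x : lp (fun _ : ℕ => ℝ) 2,
      r = inner (𝕜 := ℝ) y x - pbarSq x}, r ≤ pbarSq y / 4 := by
    rintro r ⟨x, rfl⟩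
    have hinner : (inner (𝕜 := ℝ) y x : ℝ) = ∑' n : ℕ, y n * x n := by
      rw [lp.inner_eq_tsum]; simp [RCLike.inner_apply, mul_comm]
    have hs1 : Summable (fun n : ℕ => y n * x n) := by
      have := lp.summable_inner (𝕜 := ℝ) y x
      simpa [RCLike.inner_apply, mul_comm] using this
    have hs2 := summable_pbar x
    rw [hinner, pbarSq, ← Summable.tsum_sub hs1 hs2, hpy]
    have : (∑' n : ℕ, (y n) ^ 2) / 4 = ∑' n : ℕ, (y n) ^ 2 / 4 := by
      rw [tsum_div_const]
    rw [this]
    refine Summable.tsum_le_tsum (fun n => ?_) (hs1.sub hs2) ((summable_sq y).div_const 4)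
    rcases le_or_gt 0 (x n) with h | h
    · rw [max_eq_left (by linarith : -(x n) ≤ 0)]
      nlinarith [hy n, sq_nonneg (y n)]
    · rw [max_eq_right (by linarith : (0:ℝ) ≤ -(x n)), neg_sq]
      nlinarith [sq_nonneg (x n - y n / 2)]
  -- the value is attained at x = y/2
  have hmem : pbarSq y / 4 ∈ {r : ℝ | ∃ x : lp (fun _ : ℕ => ℝ) 2,
      r = inner (𝕜 := ℝ) y x - pbarSq x} := by
    refine ⟨(2⁻¹ : ℝ) • y, ?_⟩
    have h1 : (inner (𝕜 := ℝ) y ((2⁻¹ : ℝ) • y) : ℝ) = 2⁻¹ * ∑' n : ℕ, (y n) ^ 2 := by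
      rw [real_inner_smul_right]
      congr 1
      rw [lp.inner_eq_tsum]
      refine tsum_congr fun n => ?_
      simp [RCLike.inner_apply, sq]
    have h2 : pbarSq ((2⁻¹ : ℝ) • y) = 4⁻¹ * ∑' n : ℕ, (y n) ^ 2 := by
      unfold pbarSq
      rw [← tsum_mul_left]
      refine tsum_congr fun n => ?_
      have hc : ((2⁻¹ : ℝ) • y) n = 2⁻¹ * y n := by
        rw [lp.coeFn_smul]; simp
      rw [hc, max_eq_right (by nlinarith [hy n] : (0:ℝ) ≤ -(2⁻¹ * y n)), neg_sq]
      ring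
    rw [h1, h2, hpy]
    ring
  exact le_antisymm (Real.sSup_le hub (by rw [hpy]; exact div_nonneg (tsum_nonneg fun n => sq_nonneg _) (by norm_num))) (le_csSup ⟨_, hub⟩ hmem)
end

section
/- Let μ be a probability measure, S, S' ∈ L¹(μ) with exp[(1−t)S + tS'] integrable for t in a neighbourhood of some t₀ ∈ (0,1), and define f(t) = ln ∫ exp[(1−t)S + tS'] dμ. If f''(t₀) = 0 then S' − S is μ-almost everywhere equal to a constant. -/
open MeasureTheory

lemma stmt19_absle (δ x : ℝ) (hδ : 0 < δ) :
    |x| ≤ δ⁻¹ * (Real.exp (δ * x) + Real.exp (-(δ * x))) := by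
  have h1 : δ * |x| ≤ Real.exp (δ * |x|) := (Real.add_one_le_exp _).trans' (by linarith)
  have h2 : Real.exp (δ * |x|) ≤ Real.exp (δ * x) + Real.exp (-(δ * x)) := by
    rcases abs_cases x with ⟨h, _⟩ | ⟨h, _⟩
    · rw [h]; nlinarith [Real.exp_pos (-(δ*x))]
    · rw [h, mul_neg, ← neg_mul]; nlinarith [Real.exp_pos (δ*x)]
  rw [inv_mul_eq_div, le_div_iff₀' hδ]
  exact h1.trans h2

lemma stmt19_pow (δ : ℝ) (hδ : 0 < δ) (n : ℕ) (hn : n ≤ 2) :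
    ∃ C : ℝ, 0 ≤ C ∧ ∀ x : ℝ, |x| ^ n ≤ C * (Real.exp (δ * x) + Real.exp (-(δ * x))) := by
  interval_cases n
  · exact ⟨1, zero_le_one, fun x => by
      simp only [pow_zero, one_mul]
      nlinarith [Real.exp_pos (δ*x), Real.exp_pos (-(δ*x)),
        Real.add_one_le_exp (δ*x), Real.add_one_le_exp (-(δ*x))]⟩
  · exact ⟨δ⁻¹, by positivity, fun x => by simpa using stmt19_absle δ x hδ⟩
  · refine ⟨8 / δ ^ 2, by positivity, fun x => ?_⟩
    have h := stmt19_absle (δ/2) x (by linarith)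
    have h2 : |x| ^ 2 ≤ ((δ/2)⁻¹ * (Real.exp (δ/2 * x) + Real.exp (-(δ/2 * x)))) ^ 2 :=
      pow_le_pow_left₀ (abs_nonneg x) h 2
    have e1 : Real.exp (δ/2 * x) ^ 2 = Real.exp (δ * x) := by
      rw [← Real.exp_nat_mul]; ring_nf
    have e2 : Real.exp (-(δ/2 * x)) ^ 2 = Real.exp (-(δ * x)) := by
      rw [← Real.exp_nat_mul]; ring_nf
    have hp1 := Real.exp_pos (δ/2*x); have hp2 := Real.exp_pos (-(δ/2*x))
    have hδ2 : (0:ℝ) < δ^2 := by positivity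
    calc |x|^2 ≤ ((δ/2)⁻¹ * (Real.exp (δ/2 * x) + Real.exp (-(δ/2 * x)))) ^ 2 := h2
      _ ≤ 8 / δ ^ 2 * (Real.exp (δ * x) + Real.exp (-(δ * x))) := by
          rw [mul_pow]
          have : (Real.exp (δ/2 * x) + Real.exp (-(δ/2 * x)))^2
              ≤ 2 * (Real.exp (δ * x) + Real.exp (-(δ * x))) := by
            nlinarith [sq_nonneg (Real.exp (δ/2*x) - Real.exp (-(δ/2*x)))]
          have hi : ((δ/2)⁻¹)^2 = 4 / δ^2 := by field_simp; ring
          rw [hi]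
          have h4 := mul_le_mul_of_nonneg_left this (by positivity : (0:ℝ) ≤ 4/δ^2)
          calc 4/δ^2 * (Real.exp (δ/2*x) + Real.exp (-(δ/2*x)))^2
              ≤ 4/δ^2 * (2 * (Real.exp (δ*x) + Real.exp (-(δ*x)))) := h4
            _ = 8/δ^2 * (Real.exp (δ*x) + Real.exp (-(δ*x))) := by ring

lemma stmt19_exp_le {a b : ℝ} (s x : ℝ) (ha : a ≤ s) (hb : s ≤ b) :
    Real.exp (s * x) ≤ Real.exp (a * x) + Real.exp (b * x) := by
  rcases le_total 0 x with hx | hx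
  · have : s * x ≤ b * x := mul_le_mul_of_nonneg_right hb hx
    exact le_add_of_nonneg_of_le (Real.exp_pos _).le (Real.exp_le_exp.2 this)
  · have : s * x ≤ a * x := mul_le_mul_of_nonpos_right ha hx
    exact le_add_of_le_of_nonneg (Real.exp_le_exp.2 this) (Real.exp_pos _).le

lemma stmt19_meas {Ω : Type*} [MeasurableSpace Ω] {μ : Measure Ω} {S g : Ω → ℝ}
    (hS : AEStronglyMeasurable S μ) (hg : AEStronglyMeasurable g μ) (n : ℕ) (t : ℝ) :
    AEStronglyMeasurable (fun ω => g ω ^ n * Real.exp (S ω + t * g ω)) μ := by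
  have h1 : AEMeasurable (fun ω => Real.exp (S ω + t * g ω)) μ :=
    Real.measurable_exp.comp_aemeasurable (hS.aemeasurable.add (hg.aemeasurable.const_mul t))
  exact ((hg.aemeasurable.pow_const n).mul h1).aestronglyMeasurable

lemma stmt19_integrable {Ω : Type*} [MeasurableSpace Ω] {μ : Measure Ω} {S g : Ω → ℝ}
    (hS : AEStronglyMeasurable S μ) (hg : AEStronglyMeasurable g μ)
    {t δ : ℝ} (hδ : 0 < δ)
    (h1 : Integrable (fun ω => Real.exp (S ω + (t + δ) * g ω)) μ)
    (h2 : Integrable (fun ω => Real.exp (S ω + (t - δ) * g ω)) μ)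
    {n : ℕ} (hn : n ≤ 2) :
    Integrable (fun ω => g ω ^ n * Real.exp (S ω + t * g ω)) μ := by
  obtain ⟨C, hC, hCle⟩ := stmt19_pow δ hδ n hn
  refine Integrable.mono ((h1.add h2).const_mul C) (stmt19_meas hS hg n t) ?_
  filter_upwards with ω
  have hkey : (Real.exp (δ * g ω) + Real.exp (-(δ * g ω))) * Real.exp (S ω + t * g ω)
      = Real.exp (S ω + (t + δ) * g ω) + Real.exp (S ω + (t - δ) * g ω) := by
    rw [add_mul, ← Real.exp_add, ← Real.exp_add]; ring_nf
  have hb : |g ω| ^ n * Real.exp (S ω + t * g ω)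
      ≤ C * (Real.exp (S ω + (t + δ) * g ω) + Real.exp (S ω + (t - δ) * g ω)) := by
    rw [← hkey, ← mul_assoc]
    exact mul_le_mul_of_nonneg_right (hCle (g ω)) (Real.exp_pos _).le
  have hpos : 0 ≤ Real.exp (S ω + (t + δ) * g ω) + Real.exp (S ω + (t - δ) * g ω) :=
    by positivity
  simp only [norm_mul, norm_pow, Real.norm_eq_abs, Real.abs_exp, abs_mul, Pi.add_apply,
    abs_of_nonneg hC, abs_of_nonneg hpos]
  exact hb

lemma stmt19_hasDerivAt {Ω : Type*} [MeasurableSpace Ω] {μ : Measure Ω} {S g : Ω → ℝ}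
    (hS : AEStronglyMeasurable S μ) (hg : AEStronglyMeasurable g μ)
    {t₀ η : ℝ} (hη : 0 < η)
    (hint : ∀ t : ℝ, |t - t₀| < η → Integrable (fun ω => Real.exp (S ω + t * g ω)) μ)
    {n : ℕ} (hn : n ≤ 1) {t : ℝ} (ht : |t - t₀| < η) :
    HasDerivAt (fun s => ∫ ω, g ω ^ n * Real.exp (S ω + s * g ω) ∂μ)
      (∫ ω, g ω ^ (n + 1) * Real.exp (S ω + t * g ω) ∂μ) t := by
  set ε : ℝ := (η - |t - t₀|) / 4 with hε
  have hεpos : 0 < ε := by have := abs_nonneg (t - t₀); simp only [hε]; linarith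
  have hball : ∀ s : ℝ, |s - t| ≤ 2 * ε → |s - t₀| < η := by
    intro s hs
    calc |s - t₀| ≤ |s - t| + |t - t₀| := abs_sub_le _ _ _
      _ ≤ 2 * ε + |t - t₀| := by linarith
      _ < η := by simp only [hε]; linarith
  have habs : ∀ d : ℝ, |d| ≤ 2 * ε → Integrable (fun ω => Real.exp (S ω + (t + d) * g ω)) μ := by
    intro d hd
    exact hint (t + d) (hball _ (by simpa using hd))
  obtain ⟨C, hC, hCle⟩ := stmt19_pow ε hεpos (n + 1) (by omega)
  set bound : Ω → ℝ := fun ω => C * ((Real.exp (ε * g ω) + Real.exp (-(ε * g ω))) *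
      (Real.exp (S ω + (t - ε) * g ω) + Real.exp (S ω + (t + ε) * g ω))) with hbd
  have hbound_int : Integrable bound μ := by
    have he : bound = fun ω => C * (Real.exp (S ω + t * g ω) + Real.exp (S ω + (t + 2 * ε) * g ω)
        + (Real.exp (S ω + (t - 2 * ε) * g ω) + Real.exp (S ω + t * g ω))) := by
      funext ω
      simp only [hbd, mul_add, add_mul, ← Real.exp_add]
      ring_nf
    rw [he]
    refine Integrable.const_mul ?_ C
    have h0 := habs 0 (by simp; positivity)
    simp only [add_zero] at h0
    exact ((h0.add (habs (2 * ε) (by rw [abs_of_nonneg (by linarith)]))).add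
      ((habs (-(2 * ε)) (by rw [abs_neg, abs_of_nonneg (by linarith)])).add h0)).congr
      (by filter_upwards with ω; simp only [Pi.add_apply]; ring_nf)
  refine (hasDerivAt_integral_of_dominated_loc_of_deriv_le
    (F := fun s ω => g ω ^ n * Real.exp (S ω + s * g ω))
    (F' := fun s ω => g ω ^ (n + 1) * Real.exp (S ω + s * g ω)) (Metric.ball_mem_nhds t hεpos)
    (Filter.Eventually.of_forall fun s => stmt19_meas hS hg n s)
    ?_ (stmt19_meas hS hg (n + 1) t) ?_ hbound_int ?_).2
  · exact stmt19_integrable hS hg hεpos (habs ε (by rw [abs_of_nonneg hεpos.le]; linarith))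
      (by simpa [← sub_eq_add_neg] using habs (-ε) (by rw [abs_neg, abs_of_nonneg hεpos.le]; linarith)) (by omega)
  · filter_upwards with ω s hs
    rw [Metric.mem_ball, Real.dist_eq] at hs
    have h1 : Real.exp (S ω + s * g ω)
        ≤ Real.exp (S ω + (t - ε) * g ω) + Real.exp (S ω + (t + ε) * g ω) := by
      rw [Real.exp_add, Real.exp_add, Real.exp_add, ← mul_add]
      refine mul_le_mul_of_nonneg_left ?_ (Real.exp_pos _).le
      exact stmt19_exp_le s (g ω) (by cases abs_sub_lt_iff.1 hs; linarith)
        (by cases abs_sub_lt_iff.1 hs; linarith)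
    have h2 : |g ω| ^ (n + 1) ≤ C * (Real.exp (ε * g ω) + Real.exp (-(ε * g ω))) := hCle _
    calc ‖g ω ^ (n + 1) * Real.exp (S ω + s * g ω)‖
        = |g ω| ^ (n + 1) * Real.exp (S ω + s * g ω) := by
          rw [norm_mul, norm_pow, Real.norm_eq_abs, Real.norm_eq_abs, Real.abs_exp]
      _ ≤ (C * (Real.exp (ε * g ω) + Real.exp (-(ε * g ω)))) *
          (Real.exp (S ω + (t - ε) * g ω) + Real.exp (S ω + (t + ε) * g ω)) :=
          mul_le_mul h2 h1 (Real.exp_pos _).le (by positivity)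
      _ = bound ω := by rw [hbd]; ring
  · filter_upwards with ω s _
    have hd : HasDerivAt (fun s : ℝ => S ω + s * g ω) (g ω) s := by
      simpa using ((hasDerivAt_id s).mul_const (g ω)).const_add (S ω)
    have := (hd.exp.const_mul (g ω ^ n))
    refine this.congr_deriv ?_
    rw [pow_succ]
    ring

/-- let `μ` be a probability measure, `S, S' ∈ L¹(μ)` with
`exp[(1−t)S + tS']` integrable for `t` in a neighbourhood of `t₀ ∈ (0,1)`, and
`f(t) = ln ∫ exp[(1−t)S + tS'] dμ`. If `f''(t₀) = 0`, then `S' − S` is `μ`-almost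
everywhere equal to a constant. -/
theorem stmt19 {Ω : Type*} [MeasurableSpace Ω] (μ : Measure Ω) [IsProbabilityMeasure μ]
    (S S' : Ω → ℝ) (hS : Integrable S μ) (hS' : Integrable S' μ)
    (t₀ : ℝ) (ht₀ : t₀ ∈ Set.Ioo (0 : ℝ) 1)
    (hexp : ∃ η : ℝ, 0 < η ∧ ∀ t : ℝ, |t - t₀| < η →
      Integrable (fun ω => Real.exp ((1 - t) * S ω + t * S' ω)) μ)
    (f : ℝ → ℝ)
    (hf : ∀ t : ℝ, f t = Real.log (∫ ω, Real.exp ((1 - t) * S ω + t * S' ω) ∂μ))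
    (hf'' : deriv (deriv f) t₀ = 0) :
    ∃ c : ℝ, ∀ᵐ ω ∂μ, S' ω - S ω = c := by
  obtain ⟨η, hη, hint0⟩ := hexp
  set g : Ω → ℝ := fun ω => S' ω - S ω with hgdef
  have hgm : AEStronglyMeasurable g μ := hS'.1.sub hS.1
  have hSm : AEStronglyMeasurable S μ := hS.1
  have heq : ∀ t : ℝ, (fun ω => Real.exp ((1 - t) * S ω + t * S' ω))
      = fun ω => Real.exp (S ω + t * g ω) := by
    intro t; funext ω; simp only [hgdef]; ring_nf
  have hint : ∀ t : ℝ, |t - t₀| < η →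
      Integrable (fun ω => Real.exp (S ω + t * g ω)) μ := by
    intro t ht
    have := hint0 t ht
    rwa [heq t] at this
  set I : ℕ → ℝ → ℝ := fun n t => ∫ ω, g ω ^ n * Real.exp (S ω + t * g ω) ∂μ with hI
  have hI0 : ∀ t : ℝ, I 0 t = ∫ ω, Real.exp (S ω + t * g ω) ∂μ := by
    intro t; simp only [hI, pow_zero, one_mul]
  have hI0pos : ∀ t : ℝ, |t - t₀| < η → 0 < I 0 t := by
    intro t ht
    rw [hI0 t]
    exact integral_exp_pos (hint t ht)
  have hd0 : ∀ t : ℝ, |t - t₀| < η → HasDerivAt (I 0) (I 1 t) t := fun t ht =>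
    stmt19_hasDerivAt hSm hgm hη hint (by omega) ht
  have hd1 : ∀ t : ℝ, |t - t₀| < η → HasDerivAt (I 1) (I 2 t) t := fun t ht =>
    stmt19_hasDerivAt hSm hgm hη hint (le_refl 1) ht
  have hfI : f = fun t => Real.log (I 0 t) := by
    funext t
    rw [hf t, hI0 t, heq t]
  have hfd : ∀ t : ℝ, |t - t₀| < η → deriv f t = I 1 t / I 0 t := by
    intro t ht
    rw [hfI]
    exact ((hd0 t ht).log (hI0pos t ht).ne').deriv
  have hEv : deriv f =ᶠ[nhds t₀] fun t => I 1 t / I 0 t := by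
    filter_upwards [Metric.ball_mem_nhds t₀ hη] with t ht
    exact hfd t (by rwa [Metric.mem_ball, Real.dist_eq] at ht)
  have ht₀0 : |t₀ - t₀| < η := by simpa using hη
  have hdiv : HasDerivAt (fun t => I 1 t / I 0 t)
      ((I 2 t₀ * I 0 t₀ - I 1 t₀ * I 1 t₀) / I 0 t₀ ^ 2) t₀ :=
    (hd1 t₀ ht₀0).div (hd0 t₀ ht₀0) (hI0pos t₀ ht₀0).ne'
  have hval : deriv (deriv f) t₀ = (I 2 t₀ * I 0 t₀ - I 1 t₀ * I 1 t₀) / I 0 t₀ ^ 2 := by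
    rw [hEv.deriv_eq]
    exact hdiv.deriv
  have hkey : I 2 t₀ * I 0 t₀ - I 1 t₀ * I 1 t₀ = 0 := by
    rw [hf''] at hval
    have := hval.symm
    rw [div_eq_zero_iff] at this
    rcases this with h | h
    · exact h
    · exact absurd h (pow_ne_zero 2 (hI0pos t₀ ht₀0).ne')
  -- integrability of moments at t₀
  have hintn : ∀ n : ℕ, n ≤ 2 → Integrable (fun ω => g ω ^ n * Real.exp (S ω + t₀ * g ω)) μ := by
    intro n hn
    exact stmt19_integrable hSm hgm (t := t₀) (δ := η / 2) (by linarith)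
      (hint (t₀ + η / 2) (by rw [add_sub_cancel_left, abs_of_pos (by linarith)]; linarith))
      (hint (t₀ - η / 2) (by rw [sub_sub_cancel_left, abs_neg, abs_of_pos (by linarith)]; linarith))
      hn
  set c : ℝ := I 1 t₀ / I 0 t₀ with hc
  have hI0ne := (hI0pos t₀ ht₀0).ne'
  have hexpand : (fun ω => (g ω - c) ^ 2 * Real.exp (S ω + t₀ * g ω))
      = fun ω => g ω ^ 2 * Real.exp (S ω + t₀ * g ω)
        - 2 * c * (g ω ^ 1 * Real.exp (S ω + t₀ * g ω))
        + c ^ 2 * (g ω ^ 0 * Real.exp (S ω + t₀ * g ω)) := by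
    funext ω; ring
  have hIint : Integrable (fun ω => (g ω - c) ^ 2 * Real.exp (S ω + t₀ * g ω)) μ := by
    rw [hexpand]
    exact ((hintn 2 le_rfl).sub ((hintn 1 (by omega)).const_mul (2 * c))).add
      ((hintn 0 (by omega)).const_mul (c ^ 2))
  have hzero : ∫ ω, (g ω - c) ^ 2 * Real.exp (S ω + t₀ * g ω) ∂μ = 0 := by
    rw [hexpand, integral_add, integral_sub, integral_const_mul, integral_const_mul]
    rotate_left
    · exact hintn 2 le_rfl
    · exact (hintn 1 (by omega)).const_mul _
    · exact (hintn 2 le_rfl).sub ((hintn 1 (by omega)).const_mul _)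
    · exact (hintn 0 (by omega)).const_mul _
    show I 2 t₀ - 2 * c * I 1 t₀ + c ^ 2 * I 0 t₀ = 0
    rw [hc]
    field_simp
    linear_combination hkey
  have hae : (fun ω => (g ω - c) ^ 2 * Real.exp (S ω + t₀ * g ω)) =ᵐ[μ] 0 := by
    rw [← integral_eq_zero_iff_of_nonneg (fun ω => by positivity) hIint]
    exact hzero
  refine ⟨c, ?_⟩
  filter_upwards [hae] with ω hω
  simp only [Pi.zero_apply, mul_eq_zero] at hω
  rcases hω with h | h
  · have : g ω - c = 0 := by
      exact pow_eq_zero_iff (n := 2) (by norm_num) |>.1 h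
    have hgc : g ω = c := by linarith
    simpa [hgdef] using hgc
  · exact absurd h (Real.exp_ne_zero _)
end
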